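/- arXiv:2307.03923 — 5 statements merged into one kernel-verified Lean document; each statement's English description precedes it below -/
import Mathlib

section
/- Let m ≥ 1, let S be an m × m complex Hermitian matrix, and let R be an m × m complex Hermitian invertible matrix satisfying J · R* · J = R, where J is the m × m exchange matrix (J i j = 1 if i + j = m − 1, else 0) and R* denotes the entrywise complex conjugate. Then Tr( (1/2) · (S + J · S* · J) · R⁻¹ ) = Tr(S · R⁻¹). -/
/-!
For Hermitian matrices entrywise conjugation is transposition, so the centro-Hermitian condition
says that `R` is persymmetric, `J Rᵀ J = R`, and hence `(R⁻¹)ᵀ = J R⁻¹ J` since `J² = 1`.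
Cyclicity and transpose invariance of the trace then give
`tr (J Sᵀ J R⁻¹) = tr (Sᵀ (R⁻¹)ᵀ) = tr (S R⁻¹)`.
-/

namespace Matrix

theorem IsHermitian.map_star_eq_transpose {n α : Type*} [Star α] {A : Matrix n n α}
    (hA : A.IsHermitian) : A.map star = Aᵀ := by
  rw [← conjTranspose_transpose, hA.eq]

theorem eq_permMatrix_revPerm {m : ℕ} {α : Type*} [Zero α] [One α]
    {J : Matrix (Fin m) (Fin m) α}
    (hJ : ∀ i j : Fin m, J i j = if (i : ℕ) + (j : ℕ) = m - 1 then 1 else 0) :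
    J = Fin.revPerm.permMatrix α := by
  ext i j
  rw [hJ, Equiv.Perm.permMatrix, PEquiv.toMatrix_apply, Equiv.toPEquiv_apply]
  refine if_congr ?_ rfl rfl
  rw [Option.mem_some_iff, Fin.revPerm_apply, Fin.ext_iff, Fin.val_rev]
  omega

theorem permMatrix_revPerm_mul_self {m : ℕ} {α : Type*} [NonAssocSemiring α] :
    Fin.revPerm.permMatrix α * Fin.revPerm.permMatrix α = (1 : Matrix (Fin m) (Fin m) α) := by
  rw [← permMatrix_mul, show Fin.revPerm * Fin.revPerm = (1 : Equiv.Perm (Fin m)) from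
    Equiv.ext Fin.rev_rev, permMatrix_one]

section Persymmetric

variable {n α : Type*} [Fintype n] [DecidableEq n] [CommRing α] {J R : Matrix n n α}

theorem transpose_inv_of_persymmetric (hJ : J * J = 1) (hR : J * Rᵀ * J = R) :
    R⁻¹ᵀ = J * R⁻¹ * J := by
  have hJinv : J⁻¹ = J := inv_eq_right_inv hJ
  conv_rhs => rw [← hR, mul_inv_rev, mul_inv_rev, hJinv, ← mul_assoc, ← transpose_nonsing_inv]
  rw [← mul_assoc, hJ, one_mul, mul_assoc, hJ, mul_one]

theorem trace_exchange_transpose_mul_inv_of_persymmetric (S : Matrix n n α)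
    (hJ : J * J = 1) (hR : J * Rᵀ * J = R) :
    (J * Sᵀ * J * R⁻¹).trace = (S * R⁻¹).trace := by
  calc (J * Sᵀ * J * R⁻¹).trace = (Sᵀ * (J * R⁻¹ * J)).trace := by
        rw [mul_assoc, mul_assoc, trace_mul_comm, mul_assoc, mul_assoc]
    _ = (S * R⁻¹).trace := by
        rw [← transpose_inv_of_persymmetric hJ hR, ← transpose_mul, trace_transpose,
          trace_mul_comm]

end Persymmetric

end Matrix

open Matrix

theorem stmt_4_general {m : ℕ} (S R : Matrix (Fin m) (Fin m) ℂ)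
    (hS : S.IsHermitian) (hRherm : R.IsHermitian)
    (J : Matrix (Fin m) (Fin m) ℂ)
    (hJ : ∀ i j : Fin m, J i j = if (i : ℕ) + (j : ℕ) = m - 1 then 1 else 0)
    (hcentro : J * R.map (starRingEnd ℂ) * J = R) :
    (((1 / 2 : ℂ) • (S + J * S.map (starRingEnd ℂ) * J)) * R⁻¹).trace = (S * R⁻¹).trace := by
  have hJJ : J * J = 1 := by
    rw [eq_permMatrix_revPerm hJ, permMatrix_revPerm_mul_self]
  have hpersym : J * Rᵀ * J = R := by
    rwa [← hRherm.map_star_eq_transpose]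
  have hflip : (J * S.map (starRingEnd ℂ) * J * R⁻¹).trace = (S * R⁻¹).trace := by
    rw [show S.map (starRingEnd ℂ) = Sᵀ from hS.map_star_eq_transpose,
      trace_exchange_transpose_mul_inv_of_persymmetric S hJJ hpersym]
  rw [smul_mul_assoc, trace_smul, add_mul, trace_add, hflip, smul_eq_mul]
  ring

theorem stmt_4 {m : ℕ} (hm : 1 ≤ m) (S R : Matrix (Fin m) (Fin m) ℂ)
    (hS : S.IsHermitian) (hRherm : R.IsHermitian) (hRinv : IsUnit R.det)
    (J : Matrix (Fin m) (Fin m) ℂ)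
    (hJ : ∀ i j : Fin m, J i j = if (i : ℕ) + (j : ℕ) = m - 1 then 1 else 0)
    (hcentro : J * R.map (starRingEnd ℂ) * J = R) :
    (((1 / 2 : ℂ) • (S + J * S.map (starRingEnd ℂ) * J)) * R⁻¹).trace = (S * R⁻¹).trace :=
  stmt_4_general S R hS hRherm J hJ hcentro
end

section
/- Let Y be an m × r complex matrix and let 𝒮 be any set of m × m complex Hermitian positive definite matrices. Then the infimum over R ∈ 𝒮 of Re(Tr(Y · Yᴴ · R⁻¹)) + log(det R) equals the infimum over pairs (X, R), where R ∈ 𝒮, X is an r × r complex Hermitian matrix, and the block matrix fromBlocks X Yᴴ Y R is positive semidefinite, of Re(Tr(X)) + log(det R). (Both infima are taken in the extended reals ℝ ∪ {±∞}, and for Hermitian positive definite R, det R is a positive real number.) -/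
/-!
By the Schur complement, for positive definite `R` the block matrix `fromBlocks X Yᴴ Y R` is
positive semidefinite iff `X - Yᴴ R⁻¹ Y` is. Hence every feasible `X` has
`Re Tr X ≥ Re Tr (Yᴴ R⁻¹ Y) = Re Tr (Y Yᴴ R⁻¹)`, with equality at the feasible choice
`X = Yᴴ R⁻¹ Y`; so for each `R` the inner infimum over `X` is attained and equals the first
objective.
-/

open Matrix
open scoped ComplexOrder

namespace Matrix

variable {m n R : Type*} [Fintype m] [Fintype n] [DecidableEq n]
  [Field R] [PartialOrder R] [StarRing R] [StarOrderedRing R]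

theorem PosDef.posSemidef_fromBlocks_iff {D : Matrix n n R} (hD : D.PosDef)
    (A : Matrix m m R) (C : Matrix n m R) :
    (fromBlocks A Cᴴ C D).PosSemidef ↔ (A - Cᴴ * D⁻¹ * C).PosSemidef := by
  have := hD.isUnit.invertible
  simpa using PosDef.fromBlocks₂₂ A Cᴴ hD

theorem PosDef.trace_schur_le {D : Matrix n n R} (hD : D.PosDef)
    {A : Matrix m m R} {C : Matrix n m R} (h : (fromBlocks A Cᴴ C D).PosSemidef) :
    (Cᴴ * D⁻¹ * C).trace ≤ A.trace := by
  have := ((hD.posSemidef_fromBlocks_iff A C).mp h).trace_nonneg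
  rwa [trace_sub, sub_nonneg] at this

theorem PosDef.posSemidef_fromBlocks_schur {D : Matrix n n R} (hD : D.PosDef) (C : Matrix n m R) :
    (fromBlocks (Cᴴ * D⁻¹ * C) Cᴴ C D).PosSemidef :=
  (hD.posSemidef_fromBlocks_iff _ C).mpr (by simpa using PosSemidef.zero)

end Matrix

theorem stmt_7 {m r : ℕ} (Y : Matrix (Fin m) (Fin r) ℂ)
    (𝒮 : Set (Matrix (Fin m) (Fin m) ℂ)) (h𝒮 : ∀ R ∈ 𝒮, R.PosDef) :
    sInf {v : EReal | ∃ R ∈ 𝒮,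
        v = (((Y * Yᴴ * R⁻¹).trace.re + Real.log R.det.re : ℝ) : EReal)} =
    sInf {v : EReal | ∃ (X : Matrix (Fin r) (Fin r) ℂ) (R : Matrix (Fin m) (Fin m) ℂ),
        R ∈ 𝒮 ∧ X.IsHermitian ∧ (Matrix.fromBlocks X Yᴴ Y R).PosSemidef ∧
        v = ((X.trace.re + Real.log R.det.re : ℝ) : EReal)} := by
  have trace_eq (R : Matrix (Fin m) (Fin m) ℂ) : (Y * Yᴴ * R⁻¹).trace = (Yᴴ * R⁻¹ * Y).trace :=
    (trace_mul_cycle _ _ _).symm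
  apply le_antisymm
  · refine le_sInf ?_
    rintro _ ⟨X, R, hR, -, hblock, rfl⟩
    have hle := (Complex.le_def.mp ((h𝒮 R hR).trace_schur_le hblock)).1
    refine sInf_le_of_le ⟨R, hR, rfl⟩ (EReal.coe_le_coe_iff.mpr ?_)
    rw [trace_eq]
    linarith
  · refine le_sInf ?_
    rintro _ ⟨R, hR, rfl⟩
    have hRpd := h𝒮 R hR
    refine sInf_le ⟨Yᴴ * R⁻¹ * Y, R, hR, ?_, hRpd.posSemidef_fromBlocks_schur Y, by rw [trace_eq]⟩
    exact isHermitian_conjTranspose_mul_mul Y hRpd.inv.isHermitian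
end

section
/- Let Y be an m × r complex matrix and let R_t be an m × m complex Hermitian positive definite Toeplitz matrix; set X_t = Yᴴ · R_t⁻¹ · Y. Let F denote the set of pairs (X, R) where X is an r × r complex Hermitian matrix, R is an m × m complex Hermitian Toeplitz matrix, and fromBlocks X Yᴴ Y R is positive semidefinite. Suppose (X₁, R₁) ∈ F, R₁ is positive definite, and (X₁, R₁) minimizes Re(Tr(X)) + Re(Tr(R_t⁻¹ · R)) over F. Then Re(Tr(X₁)) + log(det R₁) ≤ Re(Tr(X_t)) + log(det R_t). -/
open Matrix
open scoped ComplexOrder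

/-! The current iterate `(Xt, Rt)` is itself feasible, its Schur complement `Xt - Yᴴ Rt⁻¹ Y`
being zero, so minimality gives `Tr X1 + Tr (Rt⁻¹ R1) ≤ Tr Xt + m`. Concavity of `log det`, in
the tangent-line form `log det B - log det A ≤ Tr (A⁻¹ B) - m` (which is `log x ≤ x - 1` summed
over the eigenvalues of `A^(-1/2) B A^(-1/2)`), turns this into the claim. -/

namespace Matrix

variable {n : Type*} [Fintype n] [DecidableEq n] {𝕜 : Type*} [RCLike 𝕜]

lemma IsHermitian.coe_re_det {A : Matrix n n 𝕜} (hA : A.IsHermitian) :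
    (RCLike.re A.det : 𝕜) = A.det := by
  rw [hA.det_eq_prod_eigenvalues, ← RCLike.ofReal_prod, RCLike.ofReal_re]

lemma PosDef.re_det_pos {A : Matrix n n 𝕜} (hA : A.PosDef) : 0 < RCLike.re A.det :=
  (RCLike.pos_iff.mp hA.det_pos).1

lemma PosDef.log_re_det_le_re_trace_sub_card {A : Matrix n n 𝕜} (hA : A.PosDef) :
    Real.log (RCLike.re A.det) ≤ RCLike.re A.trace - Fintype.card n := by
  have hpos := hA.eigenvalues_pos
  rw [hA.isHermitian.det_eq_prod_eigenvalues, hA.isHermitian.trace_eq_sum_eigenvalues,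
    ← RCLike.ofReal_prod, ← RCLike.ofReal_sum, RCLike.ofReal_re, RCLike.ofReal_re,
    Real.log_prod fun i _ => (hpos i).ne', Fintype.card_eq_sum_ones, Nat.cast_sum,
    ← Finset.sum_sub_distrib]
  exact Finset.sum_le_sum fun i _ => by simpa using Real.log_le_sub_one_of_pos (hpos i)

lemma PosDef.log_re_det_sub_log_re_det_le {A B : Matrix n n 𝕜} (hA : A.PosDef) (hB : B.PosDef) :
    Real.log (RCLike.re B.det) - Real.log (RCLike.re A.det) ≤
      RCLike.re (A⁻¹ * B).trace - Fintype.card n := by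
  open scoped MatrixOrder in
  obtain ⟨S, hS, rfl⟩ : ∃ S : Matrix n n 𝕜, S.PosDef ∧ S * S = A :=
    ⟨CFC.sqrt A, hA.isStrictlyPositive.sqrt.posDef, CFC.sqrt_mul_sqrt_self A hA.posSemidef.nonneg⟩
  have hM : (S⁻¹ * B * S⁻¹).PosDef := by
    simpa [hS.inv.isHermitian.eq] using hB.conjTranspose_mul_mul_same (B := S⁻¹)
      (mulVec_injective_iff_isUnit.mpr (isUnit_nonsing_inv_iff.mpr hS.isUnit))
  have hdet : (S⁻¹ * B * S⁻¹).det = B.det * (S * S).det⁻¹ := by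
    rw [det_mul, det_mul, det_mul, det_nonsing_inv, Ring.inverse_eq_inv', mul_inv]; ring
  have htr : (S⁻¹ * B * S⁻¹).trace = ((S * S)⁻¹ * B).trace := by
    rw [trace_mul_cycle, mul_inv_rev, Matrix.mul_assoc]
  have hlogdet := hM.log_re_det_le_re_trace_sub_card
  rw [hdet, htr, ← hA.isHermitian.coe_re_det, ← RCLike.ofReal_inv, RCLike.re_mul_ofReal,
    Real.log_mul hB.re_det_pos.ne' (inv_ne_zero hA.re_det_pos.ne'), Real.log_inv] at hlogdet
  linarith

lemma PosDef.posSemidef_fromBlocks_conjTranspose_mul_inv_mul {m : Type*} [Finite m]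
    {D : Matrix n n 𝕜} (hD : D.PosDef) (C : Matrix n m 𝕜) :
    (fromBlocks (Cᴴ * D⁻¹ * C) Cᴴ C D).PosSemidef := by
  have := hD.isUnit.invertible
  simpa using (PosDef.fromBlocks₂₂ (Cᴴ * D⁻¹ * C) Cᴴ hD).mpr
    (by simpa using PosSemidef.zero)

end Matrix

theorem stmt_9_general {m r : ℕ}
    (Y : Matrix (Fin m) (Fin r) ℂ) (Rt : Matrix (Fin m) (Fin m) ℂ)
    (hRt : Rt.PosDef)
    (hRtToep : ∀ i j i' j' : Fin m, (j : ℤ) - (i : ℤ) = (j' : ℤ) - (i' : ℤ) → Rt i j = Rt i' j')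
    (Xt : Matrix (Fin r) (Fin r) ℂ) (hXt : Xt = Yᴴ * Rt⁻¹ * Y)
    (F : Set (Matrix (Fin r) (Fin r) ℂ × Matrix (Fin m) (Fin m) ℂ))
    (hF : F = {p | p.1.IsHermitian ∧ p.2.IsHermitian ∧
      (∀ i j i' j' : Fin m, (j : ℤ) - (i : ℤ) = (j' : ℤ) - (i' : ℤ) → p.2 i j = p.2 i' j') ∧
      (Matrix.fromBlocks p.1 Yᴴ Y p.2).PosSemidef})
    (X1 : Matrix (Fin r) (Fin r) ℂ) (R1 : Matrix (Fin m) (Fin m) ℂ)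
    (hR1 : R1.PosDef)
    (hmin : ∀ p ∈ F,
      X1.trace.re + (Rt⁻¹ * R1).trace.re ≤ p.1.trace.re + (Rt⁻¹ * p.2).trace.re) :
    X1.trace.re + Real.log R1.det.re ≤ Xt.trace.re + Real.log Rt.det.re := by
  have hcurrent : (Xt, Rt) ∈ F := by
    subst hXt hF
    exact ⟨isHermitian_conjTranspose_mul_mul Y hRt.isHermitian.inv, hRt.isHermitian, hRtToep,
      hRt.posSemidef_fromBlocks_conjTranspose_mul_inv_mul Y⟩
  have hdescent := hmin _ hcurrent
  have hconcave := hRt.log_re_det_sub_log_re_det_le hR1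
  rw [nonsing_inv_mul _ ((isUnit_iff_isUnit_det Rt).mp hRt.isUnit), trace_one] at hdescent
  simp only [RCLike.re_to_complex, Fintype.card_fin] at hconcave
  simp only [Fintype.card_fin, Complex.natCast_re] at hdescent
  linarith

theorem stmt_9 {m r : ℕ}
    (Y : Matrix (Fin m) (Fin r) ℂ) (Rt : Matrix (Fin m) (Fin m) ℂ)
    (hRt : Rt.PosDef)
    (hRtToep : ∀ i j i' j' : Fin m, (j : ℤ) - (i : ℤ) = (j' : ℤ) - (i' : ℤ) → Rt i j = Rt i' j')
    (Xt : Matrix (Fin r) (Fin r) ℂ) (hXt : Xt = Yᴴ * Rt⁻¹ * Y)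
    (F : Set (Matrix (Fin r) (Fin r) ℂ × Matrix (Fin m) (Fin m) ℂ))
    (hF : F = {p | p.1.IsHermitian ∧ p.2.IsHermitian ∧
      (∀ i j i' j' : Fin m, (j : ℤ) - (i : ℤ) = (j' : ℤ) - (i' : ℤ) → p.2 i j = p.2 i' j') ∧
      (Matrix.fromBlocks p.1 Yᴴ Y p.2).PosSemidef})
    (X1 : Matrix (Fin r) (Fin r) ℂ) (R1 : Matrix (Fin m) (Fin m) ℂ)
    (hmem : (X1, R1) ∈ F) (hR1 : R1.PosDef)
    (hmin : ∀ p ∈ F,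
      X1.trace.re + (Rt⁻¹ * R1).trace.re ≤ p.1.trace.re + (Rt⁻¹ * p.2).trace.re) :
    X1.trace.re + Real.log R1.det.re ≤ Xt.trace.re + Real.log Rt.det.re :=
  stmt_9_general Y Rt hRt hRtToep Xt hXt F hF X1 R1 hR1 hmin
end

section
/- Let E be a metric space, C ⊆ E a closed set, and h : E × E → ℝ a continuous function; define l : E → ℝ by l(x) = h(x, x). Assume for all x, y ∈ C that h(y, x) ≥ l(y), and let (x_t)_{t ∈ ℕ} be a sequence in C such that for each t, h(x_{t+1}, x_t) ≤ h(y, x_t) for all y ∈ C. If Z ∈ E is the limit of a subsequence (x_{r_t}) with r : ℕ → ℕ strictly monotone, then Z ∈ C and h(Z, Z) ≤ h(y, Z) for every y ∈ C; that is, Z minimizes the surrogate h(·, Z) over C. -/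
/-!
Along the MM iterates the diagonal values `l (x t) = h (x t, x t)` decrease, since
`l (x (t+1)) ≤ h (x (t+1), x t) ≤ h (x t, x t)`. Hence for every `y ∈ C` and every `n > t`,
`l (x n) ≤ h (y, x t)`. Applying this with `t = r k` and `n = r (k+1)` and letting `k → ∞`,
continuity of `h` gives `h (Z, Z) ≤ h (y, Z)`.
-/

open Filter Topology

section Descent

variable {α β : Type*} [Preorder β] {C : Set α} {h : α × α → β} {x : ℕ → α}

theorem antitone_surrogate_diag (hmaj : ∀ x ∈ C, ∀ y ∈ C, h (y, y) ≤ h (y, x))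
    (hxC : ∀ t, x t ∈ C) (hstep : ∀ t, ∀ y ∈ C, h (x (t + 1), x t) ≤ h (y, x t)) :
    Antitone fun t => h (x t, x t) :=
  antitone_nat_of_succ_le fun t =>
    (hmaj _ (hxC t) _ (hxC (t + 1))).trans (hstep t _ (hxC t))

theorem surrogate_diag_le_of_lt (hmaj : ∀ x ∈ C, ∀ y ∈ C, h (y, y) ≤ h (y, x))
    (hxC : ∀ t, x t ∈ C) (hstep : ∀ t, ∀ y ∈ C, h (x (t + 1), x t) ≤ h (y, x t))
    {t n : ℕ} (htn : t < n) {y : α} (hy : y ∈ C) :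
    h (x n, x n) ≤ h (y, x t) :=
  calc h (x n, x n) ≤ h (x (t + 1), x (t + 1)) := antitone_surrogate_diag hmaj hxC hstep htn
    _ ≤ h (x (t + 1), x t) := hmaj _ (hxC t) _ (hxC (t + 1))
    _ ≤ h (y, x t) := hstep t y hy

end Descent

theorem stmt_10 {E : Type*} [MetricSpace E] (C : Set E) (hC : IsClosed C)
    (h : E × E → ℝ) (hcont : Continuous h)
    (l : E → ℝ) (hl : ∀ x, l x = h (x, x))
    (hmaj : ∀ x ∈ C, ∀ y ∈ C, h (y, x) ≥ l y)
    (x : ℕ → E) (hxC : ∀ t, x t ∈ C)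
    (hstep : ∀ t, ∀ y ∈ C, h (x (t + 1), x t) ≤ h (y, x t))
    (Z : E) (r : ℕ → ℕ) (hr : StrictMono r)
    (hlim : Filter.Tendsto (fun t => x (r t)) Filter.atTop (nhds Z)) :
    Z ∈ C ∧ ∀ y ∈ C, h (Z, Z) ≤ h (y, Z) := by
  simp only [hl] at hmaj
  refine ⟨hC.mem_of_tendsto hlim (.of_forall fun t => hxC _), fun y hy => ?_⟩
  have hdiag : Tendsto (fun t => h (x (r (t + 1)), x (r (t + 1)))) atTop (𝓝 (h (Z, Z))) :=
    ((hcont.comp (continuous_id.prodMk continuous_id)).tendsto Z).comp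
      (hlim.comp (tendsto_add_atTop_nat 1))
  have hsurr : Tendsto (fun t => h (y, x (r t))) atTop (𝓝 (h (y, Z))) :=
    ((hcont.comp (Continuous.prodMk_right y)).tendsto Z).comp hlim
  exact le_of_tendsto_of_tendsto' hdiag hsurr fun t =>
    surrogate_diag_le_of_lt hmaj hxC hstep (hr t.lt_succ_self) hy
end

section
/- Let A be an n × n complex Hermitian matrix with spectral decomposition A = V · D · Vᴴ, where V is unitary and D is the real diagonal matrix of eigenvalues of A. Define A₊ = V · D₊ · Vᴴ, where D₊ is obtained from D by replacing every negative diagonal entry with 0. Then A₊ is Hermitian positive semidefinite and for every n × n Hermitian positive semidefinite matrix U, ‖A − A₊‖_F ≤ ‖A − U‖_F, where ‖M‖_F = sqrt(Re Tr(Mᴴ M)) is the Frobenius norm. Moreover, the minimizer is unique: if U is positive semidefinite and ‖A − U‖_F = ‖A − A₊‖_F, then U = A₊. -/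
/-!
Conjugation by a unitary matrix preserves the Frobenius norm, so after passing to the basis of
`V` the matrix `A` becomes the real diagonal `D` and a PSD matrix `U` becomes a PSD matrix `B`.
Entrywise, using only that the diagonal entries of `B` are nonnegative reals, one gets the
obtuse-angle inequality `‖D - D₊‖² + ‖B - D₊‖² ≤ ‖D - B‖²` characterising the projection onto a
closed convex set. Minimality of `A₊` and its uniqueness as a minimiser both follow at once.
-/

open Matrix
open scoped ComplexOrder

/-- Frobenius norm of a complex matrix. -/
noncomputable def frob {p q : ℕ} (M : Matrix (Fin p) (Fin q) ℂ) : ℝ :=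
  Real.sqrt ((Mᴴ * M).trace.re)

namespace Matrix

lemma re_trace_conjTranspose_mul_self {m n : Type*} [Fintype m] [Fintype n] (M : Matrix m n ℂ) :
    (Mᴴ * M).trace.re = ∑ i, ∑ j, Complex.normSq (M i j) := by
  simp only [trace, diag, mul_apply, conjTranspose_apply, Complex.re_sum, Complex.star_def]
  rw [Finset.sum_comm]
  simp [← Complex.normSq_eq_conj_mul_self]

lemma trace_conjTranspose_mul_self_unitary_conj {n R : Type*} [Fintype n] [DecidableEq n]
    [CommRing R] [StarRing R] {V : Matrix n n R} (hV : V ∈ unitaryGroup n R) (M : Matrix n n R) :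
    ((V * M * Vᴴ)ᴴ * (V * M * Vᴴ)).trace = (Mᴴ * M).trace := by
  have hVV : Vᴴ * V = 1 := mem_unitaryGroup_iff'.mp hV
  calc ((V * M * Vᴴ)ᴴ * (V * M * Vᴴ)).trace = (V * (Mᴴ * (Vᴴ * V) * M) * Vᴴ).trace := by
        simp only [conjTranspose_mul, conjTranspose_conjTranspose, Matrix.mul_assoc]
    _ = (Vᴴ * V * (Mᴴ * (Vᴴ * V) * M)).trace := trace_mul_cycle _ _ _
    _ = (Mᴴ * M).trace := by rw [hVV, Matrix.one_mul, Matrix.mul_one]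

end Matrix

section Frobenius

variable {p q n : ℕ}

lemma frob_sq (M : Matrix (Fin p) (Fin q) ℂ) :
    frob M ^ 2 = ∑ i, ∑ j, Complex.normSq (M i j) := by
  rw [frob, Real.sq_sqrt, re_trace_conjTranspose_mul_self]
  rw [re_trace_conjTranspose_mul_self]
  exact Finset.sum_nonneg fun i _ => Finset.sum_nonneg fun j _ => Complex.normSq_nonneg _

lemma frob_nonneg (M : Matrix (Fin p) (Fin q) ℂ) : 0 ≤ frob M := Real.sqrt_nonneg _

lemma frob_eq_zero_iff {M : Matrix (Fin p) (Fin q) ℂ} : frob M = 0 ↔ M = 0 := by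
  rw [← sq_eq_zero_iff, frob_sq, ← Matrix.ext_iff]
  simp [Finset.sum_eq_zero_iff_of_nonneg, Finset.sum_nonneg, Complex.normSq_nonneg]

lemma frob_unitary_conj {V : Matrix (Fin n) (Fin n) ℂ} (hV : V ∈ unitaryGroup (Fin n) ℂ)
    (M : Matrix (Fin n) (Fin n) ℂ) : frob (V * M * Vᴴ) = frob M := by
  rw [frob, frob, trace_conjTranspose_mul_self_unitary_conj hV]

end Frobenius

lemma sq_sub_max_zero_add_normSq_le (x : ℝ) {z : ℂ} (hz : 0 ≤ z) :
    (x - max x 0) ^ 2 + Complex.normSq (z - (max x 0 : ℝ)) ≤ Complex.normSq ((x : ℂ) - z) := by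
  obtain ⟨hre, him⟩ := Complex.nonneg_iff.mp hz
  simp only [Complex.normSq_apply, Complex.sub_re, Complex.sub_im, Complex.ofReal_re,
    Complex.ofReal_im, ← him]
  rcases le_total x 0 with hx | hx
  · rw [max_eq_right hx]
    nlinarith [mul_nonneg (neg_nonneg.mpr hx) hre]
  · rw [max_eq_left hx]
    nlinarith

lemma normSq_diagonal_sub_diagonal_max_zero_add_le {ι : Type*} [DecidableEq ι] (d : ι → ℝ)
    {B : Matrix ι ι ℂ} (hB : B.PosSemidef) (i j : ι) :
    Complex.normSq ((diagonal (fun k => ((d k : ℝ) : ℂ)) -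
        diagonal (fun k => ((max (d k) 0 : ℝ) : ℂ))) i j) +
      Complex.normSq ((B - diagonal (fun k => ((max (d k) 0 : ℝ) : ℂ))) i j) ≤
      Complex.normSq ((diagonal (fun k => ((d k : ℝ) : ℂ)) - B) i j) := by
  rcases eq_or_ne i j with rfl | hij
  · simpa [sq, diagonal_apply_eq, ← Complex.ofReal_sub] using
      sq_sub_max_zero_add_normSq_le (d i) (hB.diag_nonneg (i := i))
  · simp [diagonal_apply_ne _ hij]

section Projection

variable {n : ℕ}

lemma frob_sq_add_frob_sq_le_of_diagonal (d : Fin n → ℝ) {B : Matrix (Fin n) (Fin n) ℂ}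
    (hB : B.PosSemidef) :
    frob (diagonal (fun k => ((d k : ℝ) : ℂ)) - diagonal (fun k => ((max (d k) 0 : ℝ) : ℂ))) ^ 2 +
      frob (B - diagonal (fun k => ((max (d k) 0 : ℝ) : ℂ))) ^ 2 ≤
      frob (diagonal (fun k => ((d k : ℝ) : ℂ)) - B) ^ 2 := by
  simp only [frob_sq, ← Finset.sum_add_distrib]
  gcongr with i _ j _
  exact normSq_diagonal_sub_diagonal_max_zero_add_le d hB i j

lemma frob_unitary_conj_sub_unitary_conj {V : Matrix (Fin n) (Fin n) ℂ}
    (hV : V ∈ unitaryGroup (Fin n) ℂ) (X Y : Matrix (Fin n) (Fin n) ℂ) :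
    frob (V * X * Vᴴ - V * Y * Vᴴ) = frob (X - Y) := by
  rw [← Matrix.sub_mul, ← Matrix.mul_sub, frob_unitary_conj hV]

theorem frob_sq_add_frob_sq_le_of_unitary {V : Matrix (Fin n) (Fin n) ℂ}
    (hV : V ∈ unitaryGroup (Fin n) ℂ) (d : Fin n → ℝ) {U : Matrix (Fin n) (Fin n) ℂ}
    (hU : U.PosSemidef) :
    frob (V * diagonal (fun k => ((d k : ℝ) : ℂ)) * Vᴴ -
        V * diagonal (fun k => ((max (d k) 0 : ℝ) : ℂ)) * Vᴴ) ^ 2 +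
      frob (U - V * diagonal (fun k => ((max (d k) 0 : ℝ) : ℂ)) * Vᴴ) ^ 2 ≤
      frob (V * diagonal (fun k => ((d k : ℝ) : ℂ)) * Vᴴ - U) ^ 2 := by
  have hVV : V * Vᴴ = 1 := mem_unitaryGroup_iff.mp hV
  have hU_conj : U = V * (Vᴴ * U * V) * Vᴴ := by
    simp only [← Matrix.mul_assoc, hVV, Matrix.one_mul]
    rw [Matrix.mul_assoc, hVV, Matrix.mul_one]
  rw [hU_conj]
  simp only [frob_unitary_conj_sub_unitary_conj hV]
  exact frob_sq_add_frob_sq_le_of_diagonal d (hU.conjTranspose_mul_mul_same V)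

end Projection

theorem stmt_12_general {n : ℕ} (A : Matrix (Fin n) (Fin n) ℂ)
    (V : Matrix (Fin n) (Fin n) ℂ) (hV : V ∈ Matrix.unitaryGroup (Fin n) ℂ)
    (d : Fin n → ℝ)
    (hdecomp : A = V * Matrix.diagonal (fun i => ((d i : ℝ) : ℂ)) * Vᴴ)
    (Aplus : Matrix (Fin n) (Fin n) ℂ)
    (hAplus : Aplus = V * Matrix.diagonal (fun i => ((max (d i) 0 : ℝ) : ℂ)) * Vᴴ) :
    Aplus.PosSemidef ∧
    (∀ U : Matrix (Fin n) (Fin n) ℂ, U.PosSemidef → frob (A - Aplus) ≤ frob (A - U)) ∧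
    (∀ U : Matrix (Fin n) (Fin n) ℂ, U.PosSemidef →
      frob (A - U) = frob (A - Aplus) → U = Aplus) := by
  subst hdecomp hAplus
  have hproj := fun (U : Matrix (Fin n) (Fin n) ℂ) (hU : U.PosSemidef) => frob_sq_add_frob_sq_le_of_unitary hV d hU
  have hD_plus : (diagonal (fun i => ((max (d i) 0 : ℝ) : ℂ))).PosSemidef :=
    posSemidef_diagonal_iff.mpr fun i => by exact_mod_cast le_max_right (d i) 0
  refine ⟨hD_plus.mul_mul_conjTranspose_same V, fun U hU => ?_, fun U hU hfrob => ?_⟩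
  · have := hproj U hU
    exact (pow_le_pow_iff_left₀ (frob_nonneg _) (frob_nonneg _) two_ne_zero).mp
      (le_of_add_le_of_nonneg_left this (sq_nonneg _))
  · have := hproj U hU
    rw [hfrob, add_le_iff_nonpos_right] at this
    exact sub_eq_zero.mp (frob_eq_zero_iff.mp (pow_eq_zero_iff two_ne_zero |>.mp
      (le_antisymm this (sq_nonneg _))))

theorem stmt_12 {n : ℕ} (A : Matrix (Fin n) (Fin n) ℂ) (hA : A.IsHermitian)
    (V : Matrix (Fin n) (Fin n) ℂ) (hV : V ∈ Matrix.unitaryGroup (Fin n) ℂ)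
    (d : Fin n → ℝ)
    (hdecomp : A = V * Matrix.diagonal (fun i => ((d i : ℝ) : ℂ)) * Vᴴ)
    (Aplus : Matrix (Fin n) (Fin n) ℂ)
    (hAplus : Aplus = V * Matrix.diagonal (fun i => ((max (d i) 0 : ℝ) : ℂ)) * Vᴴ) :
    Aplus.PosSemidef ∧
    (∀ U : Matrix (Fin n) (Fin n) ℂ, U.PosSemidef → frob (A - Aplus) ≤ frob (A - U)) ∧
    (∀ U : Matrix (Fin n) (Fin n) ℂ, U.PosSemidef →
      frob (A - U) = frob (A - Aplus) → U = Aplus) :=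
  stmt_12_general A V hV d hdecomp Aplus hAplus
end
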